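/- Let s ≥ 0 and d ≥ 1. The specialized space X^s(ℝ^d), equipped with the inner product ⟨f,g⟩ = ∫ ω_s(ξ) f̂(ξ) conj(ĝ(ξ)) dξ, is a Hilbert space (in particular, it is complete). -/

import Mathlib

open MeasureTheory
open scoped ENNReal NNReal ComplexConjugate

/-- The anisotropic weight `ω_s` defining the specialized space `X^s(ℝ^d)`. -/
noncomputable def omegaD (d : ℕ) (hd : 0 < d) (s : ℝ) (ξ : EuclideanSpace ℝ (Fin d)) : ℝ :=
  if ‖ξ‖ < 1 then ((ξ ⟨0, hd⟩) ^ 2 + ‖ξ‖ ^ 4) / ‖ξ‖ ^ 2 else (1 + ‖ξ‖ ^ 2) ^ s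

/-- The squared `X^s` norm of (the distribution whose Fourier transform is) `G`. -/
noncomputable def XnormSq (d : ℕ) (hd : 0 < d) (s : ℝ)
    (G : EuclideanSpace ℝ (Fin d) → ℂ) : ℝ≥0∞ :=
  ∫⁻ ξ, ENNReal.ofReal (omegaD d hd s ξ) * (‖G ξ‖₊ : ℝ≥0∞) ^ 2

/-
In terms of the measure `μ = ω_s dξ`, the `X^s` norm is the `L²(μ)` norm, so a Cauchy sequence
has a limit `G` in the complete space `L²(μ)`. As `ω_s > 0` off the origin, `μ` and Lebesgue
measure have the same null sets. Conjugate symmetry passes to the limit because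
`H ↦ conj ∘ H ∘ neg` is an isometry fixing every `F m`, so `G` and its reflection are both limits.
Local integrability follows from `|G| ≤ ω_s⁻¹ + ω_s |G|²` once `ω_s⁻¹` is locally integrable:
outside the unit ball `ω_s⁻¹ = (1 + |ξ|²)^(-s)` is continuous, and inside it
`ω_s⁻¹ = |ξ|² / (ξ₁² + |ξ|⁴)` is at most `1` if `d = 1`, and at most `|ξ₁|^(-3/4) |ξ₂|^(-1/2)`
by weighted AM-GM if `d ≥ 2`.
-/

open Filter Topology Metric

lemma sq_div_sq_add_pow_four_le {x y r : ℝ} (hx : 0 < x) (hy : 0 < y) (hyr : y ≤ r) :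
    r ^ 2 / (x ^ 2 + r ^ 4) ≤ x ^ (-(3 / 4) : ℝ) * y ^ (-(1 / 2) : ℝ) := by
  have hr : 0 < r := hy.trans_le hyr
  have hamgm : x ^ (3 / 4 : ℝ) * r ^ (5 / 2 : ℝ) ≤ x ^ 2 + r ^ 4 := by
    have := Real.geom_mean_le_arith_mean2_weighted (w₁ := 3 / 8) (w₂ := 5 / 8)
      (p₁ := x ^ 2) (p₂ := r ^ 4) (by norm_num) (by norm_num) (by positivity) (by positivity)
      (by norm_num)
    rw [← Real.rpow_natCast, ← Real.rpow_natCast r, ← Real.rpow_mul hx.le,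
      ← Real.rpow_mul hr.le] at this
    norm_num at this
    nlinarith [sq_nonneg x, pow_nonneg hr.le 4]
  calc r ^ 2 / (x ^ 2 + r ^ 4) ≤ r ^ 2 / (x ^ (3 / 4 : ℝ) * r ^ (5 / 2 : ℝ)) :=
        div_le_div_of_nonneg_left (by positivity) (by positivity) hamgm
    _ = x ^ (-(3 / 4) : ℝ) * r ^ (-(1 / 2) : ℝ) := by
        rw [Real.rpow_neg hx.le, Real.rpow_neg hr.le, ← Real.rpow_natCast r 2,
          show (5 / 2 : ℝ) = (2 : ℕ) + 1 / 2 by norm_num, Real.rpow_add hr]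
        field_simp
    _ ≤ x ^ (-(3 / 4) : ℝ) * y ^ (-(1 / 2) : ℝ) :=
        mul_le_mul_of_nonneg_left (Real.rpow_le_rpow_of_nonpos hy hyr (by norm_num))
          (by positivity)

lemma ENNReal.le_inv_add_mul_sq (w x : ℝ≥0∞) : x ≤ w⁻¹ + w * x ^ 2 := by
  rcases le_or_gt (x * w) 1 with h | h
  · exact le_add_right (ENNReal.le_inv_iff_mul_le.mpr h)
  · calc x = 1 * x := (one_mul x).symm
      _ ≤ x * w * x := by gcongr
      _ ≤ w⁻¹ + w * x ^ 2 := le_add_left (by rw [sq, mul_comm x w, mul_assoc])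

lemma locallyIntegrable_of_lintegral_mul_enorm_sq_lt_top {X E : Type*} [MeasurableSpace X]
    [TopologicalSpace X] [LocallyCompactSpace X] [NormedAddCommGroup E] {μ : Measure X}
    {w : X → ℝ≥0∞} (hw : Measurable w) (hw_inv : ∀ K, IsCompact K → ∫⁻ x in K, (w x)⁻¹ ∂μ < ∞)
    {f : X → E} (hf : AEStronglyMeasurable f μ) (hfin : ∫⁻ x, w x * ‖f x‖ₑ ^ 2 ∂μ < ∞) :
    LocallyIntegrable f μ := by
  refine locallyIntegrable_iff.2 fun K hK => ⟨hf.restrict, ?_⟩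
  calc ∫⁻ x in K, ‖f x‖ₑ ∂μ ≤ ∫⁻ x in K, (w x)⁻¹ + w x * ‖f x‖ₑ ^ 2 ∂μ :=
        lintegral_mono fun x => ENNReal.le_inv_add_mul_sq _ _
    _ = ∫⁻ x in K, (w x)⁻¹ ∂μ + ∫⁻ x in K, w x * ‖f x‖ₑ ^ 2 ∂μ := lintegral_add_left hw.inv _
    _ < ∞ := ENNReal.add_lt_top.2 ⟨hw_inv K hK, (setLIntegral_le_lintegral _ _).trans_lt hfin⟩

theorem exists_memLp_tendsto_eLpNorm_of_cauchy {α E : Type*} [MeasurableSpace α]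
    {μ : Measure α} [NormedAddCommGroup E] [CompleteSpace E] {p : ℝ≥0∞} [Fact (1 ≤ p)]
    {f : ℕ → α → E} (hf : ∀ n, MemLp (f n) p μ)
    (hcau : ∀ ε > 0, ∃ N, ∀ m, N ≤ m → ∀ n, N ≤ n → eLpNorm (f m - f n) p μ < ε) :
    ∃ g, MemLp g p μ ∧ Tendsto (fun n => eLpNorm (f n - g) p μ) atTop (𝓝 0) := by
  have : CauchySeq fun n => (hf n).toLp := by
    simpa only [EMetric.cauchySeq_iff, Lp.edist_toLp_toLp] using hcau
  obtain ⟨L, hL⟩ := cauchySeq_tendsto_of_complete this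
  refine ⟨L, Lp.memLp L, ?_⟩
  rw [← Lp.toLp_coeFn L (Lp.memLp L)] at hL
  exact (Lp.tendsto_Lp_iff_tendsto_eLpNorm'' f hf L (Lp.memLp L)).mp hL

lemma integrable_indicator_ball_abs_rpow {e : ℝ} (he : -1 < e) :
    Integrable ((ball (0 : ℝ) 1).indicator fun t => |t| ^ e) := by
  rw [integrable_indicator_iff measurableSet_ball]
  refine integrableOn_ball_of_norm_le_rpow (C := 1) (α := -e) (by simp) (by simp; linarith) ?_
    ((continuous_abs.measurable.pow_const e).aestronglyMeasurable)
  exact ae_of_all _ fun t => by simp [abs_of_nonneg (Real.rpow_nonneg (abs_nonneg t) e)]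

lemma integrable_prod_indicator_ball_abs_rpow {ι : Type*} [Fintype ι] {e : ι → ℝ}
    (he : ∀ i, -1 < e i) :
    Integrable fun x : EuclideanSpace ℝ ι =>
      ∏ i, (ball (0 : ℝ) 1).indicator (fun t => |t| ^ e i) (x i) :=
  (PiLp.volume_preserving_ofLp ι).integrable_comp_of_integrable
    (Integrable.fintype_prod fun i => integrable_indicator_ball_abs_rpow (he i))

lemma ae_apply_ne_zero {ι : Type*} [Fintype ι] (i : ι) :
    ∀ᵐ x : EuclideanSpace ℝ ι, x i ≠ 0 :=
  (PiLp.volume_preserving_ofLp ι).quasiMeasurePreserving.ae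
    (measure_mono_null (fun _ h => not_not.mp h) (Measure.pi_hyperplane _ i 0))

section Weight

variable {d : ℕ} (hd : 0 < d) (s : ℝ)

lemma omegaD_pos {ξ : EuclideanSpace ℝ (Fin d)} (hξ : ξ ≠ 0) : 0 < omegaD d hd s ξ := by
  have := norm_pos_iff.mpr hξ
  unfold omegaD
  split_ifs <;> positivity

lemma omegaD_neg (ξ : EuclideanSpace ℝ (Fin d)) : omegaD d hd s (-ξ) = omegaD d hd s ξ := by
  simp [omegaD]

lemma measurable_omegaD : Measurable (omegaD d hd s) := by
  unfold omegaD
  refine Measurable.ite (measurableSet_lt measurable_norm measurable_const) ?_ ?_ <;> fun_prop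

lemma inv_omegaD_of_one_le_norm {ξ : EuclideanSpace ℝ (Fin d)} (hξ : 1 ≤ ‖ξ‖) :
    (omegaD d hd s ξ)⁻¹ = (1 + ‖ξ‖ ^ 2) ^ (-s) := by
  rw [omegaD, if_neg hξ.not_gt, Real.rpow_neg (by positivity)]

lemma inv_omegaD_le_of_norm_lt_one (hd₁ : 1 < d) {ξ : EuclideanSpace ℝ (Fin d)} (hξ : ‖ξ‖ < 1)
    (h₀ : ξ ⟨0, hd⟩ ≠ 0) (h₁ : ξ ⟨1, hd₁⟩ ≠ 0) :
    (omegaD d hd s ξ)⁻¹ ≤ |ξ ⟨0, hd⟩| ^ (-(3 / 4) : ℝ) * |ξ ⟨1, hd₁⟩| ^ (-(1 / 2) : ℝ) := by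
  rw [omegaD, if_pos hξ, inv_div, ← sq_abs (ξ _)]
  exact sq_div_sq_add_pow_four_le (abs_pos.mpr h₀) (abs_pos.mpr h₁) (PiLp.norm_apply_le ξ _)

lemma inv_omegaD_le_one_of_dim_one (hd₁ : d = 1) {ξ : EuclideanSpace ℝ (Fin d)} (hξ₀ : ξ ≠ 0)
    (hξ : ‖ξ‖ < 1) : (omegaD d hd s ξ)⁻¹ ≤ 1 := by
  subst hd₁
  have hr : 0 < ‖ξ‖ := norm_pos_iff.mpr hξ₀
  have hnorm : ξ ⟨0, hd⟩ ^ 2 = ‖ξ‖ ^ 2 := by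
    simp [EuclideanSpace.norm_eq, Real.sq_sqrt (sq_nonneg _)]
  rw [omegaD, if_pos hξ, hnorm, inv_div, div_le_one (by positivity)]
  nlinarith [pow_nonneg hr.le 4]

lemma exists_locallyIntegrable_inv_omegaD_le_of_norm_lt_one :
    ∃ g : EuclideanSpace ℝ (Fin d) → ℝ, LocallyIntegrable g ∧ 0 ≤ g ∧
      ∀ᵐ ξ, ‖ξ‖ < 1 → (omegaD d hd s ξ)⁻¹ ≤ g ξ := by
  rcases (Nat.one_le_iff_ne_zero.mpr hd.ne').eq_or_lt with hd₁ | hd₁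
  · refine ⟨1, locallyIntegrable_const 1, zero_le_one, ?_⟩
    filter_upwards [ae_apply_ne_zero (⟨0, hd⟩ : Fin d)] with ξ hξ₀ hξ
    exact inv_omegaD_le_one_of_dim_one hd s hd₁.symm (fun h => hξ₀ (by simp [h])) hξ
  set i₀ : Fin d := ⟨0, hd⟩
  set i₁ : Fin d := ⟨1, hd₁⟩
  have hi : i₀ ≠ i₁ := by simp [i₀, i₁, Fin.ext_iff]
  set e : Fin d → ℝ := fun j => if j = i₀ then -(3 / 4) else if j = i₁ then -(1 / 2) else 0
  refine ⟨fun ξ => ∏ j, (ball (0 : ℝ) 1).indicator (fun t => |t| ^ e j) (ξ j),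
    (integrable_prod_indicator_ball_abs_rpow fun j => ?_).locallyIntegrable,
    fun ξ => Finset.prod_nonneg fun j _ => Set.indicator_nonneg (fun t _ => by positivity) _, ?_⟩
  · simp only [e]; split_ifs <;> norm_num
  filter_upwards [ae_apply_ne_zero i₀, ae_apply_ne_zero i₁] with ξ h₀ h₁ hξ
  have hball : ∀ j, ξ j ∈ ball (0 : ℝ) 1 := fun j => by
    simpa using (PiLp.norm_apply_le ξ j).trans_lt hξ
  simp only [Set.indicator_of_mem (hball _)]
  rw [Fintype.prod_eq_mul i₀ i₁ hi (fun j hj => by simp [e, hj.1, hj.2])]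
  simpa [e, hi.symm] using inv_omegaD_le_of_norm_lt_one hd s hd₁ hξ h₀ h₁

lemma setLIntegral_inv_omegaD_lt_top {K : Set (EuclideanSpace ℝ (Fin d))} (hK : IsCompact K) :
    ∫⁻ ξ in K, (ENNReal.ofReal (omegaD d hd s ξ))⁻¹ < ∞ := by
  obtain ⟨g, hg, hg₀, hg_le⟩ := exists_locallyIntegrable_inv_omegaD_le_of_norm_lt_one hd s
  set h : EuclideanSpace ℝ (Fin d) → ℝ := fun ξ => (1 + ‖ξ‖ ^ 2) ^ (-s)
  have hh : LocallyIntegrable h :=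
    (Continuous.rpow_const (by fun_prop) fun _ => Or.inl (by positivity)).locallyIntegrable
  have hle : ∀ᵐ ξ, (ENNReal.ofReal (omegaD d hd s ξ))⁻¹ ≤ ENNReal.ofReal (g ξ + h ξ) := by
    filter_upwards [hg_le, ae_apply_ne_zero (⟨0, hd⟩ : Fin d)] with ξ hξ hξ₀
    have hξ₀' : ξ ≠ 0 := fun h => hξ₀ (by simp [h])
    rw [← ENNReal.ofReal_inv_of_pos (omegaD_pos hd s hξ₀')]
    refine ENNReal.ofReal_le_ofReal ?_
    have hh₀ : 0 ≤ h ξ := by positivity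
    rcases lt_or_ge ‖ξ‖ 1 with hlt | hge
    · linarith [hξ hlt]
    · rw [inv_omegaD_of_one_le_norm hd s hge]
      exact le_add_of_nonneg_left (hg₀ ξ)
  calc ∫⁻ ξ in K, (ENNReal.ofReal (omegaD d hd s ξ))⁻¹
      ≤ ∫⁻ ξ in K, ENNReal.ofReal (g ξ + h ξ) := lintegral_mono_ae (ae_restrict_of_ae hle)
    _ < ∞ := ((hg.add hh).integrableOn_isCompact hK).lintegral_lt_top

noncomputable def xsMeasure (d : ℕ) (hd : 0 < d) (s : ℝ) : Measure (EuclideanSpace ℝ (Fin d)) :=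
  volume.withDensity fun ξ => ENNReal.ofReal (omegaD d hd s ξ)

lemma xsMeasure_absolutelyContinuous : xsMeasure d hd s ≪ volume :=
  withDensity_absolutelyContinuous _ _

lemma absolutelyContinuous_xsMeasure : volume ≪ xsMeasure d hd s := by
  refine withDensity_absolutelyContinuous' (measurable_omegaD hd s).ennreal_ofReal.aemeasurable ?_
  filter_upwards [ae_apply_ne_zero (⟨0, hd⟩ : Fin d)] with ξ hξ₀
  exact ENNReal.ofReal_pos.mpr (omegaD_pos hd s fun h => hξ₀ (by simp [h])) |>.ne'

lemma XnormSq_eq_eLpNorm_sq (G : EuclideanSpace ℝ (Fin d) → ℂ) :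
    XnormSq d hd s G = eLpNorm G 2 (xsMeasure d hd s) ^ 2 := by
  have := eLpNorm_nnreal_pow_eq_lintegral (μ := xsMeasure d hd s) (f := G) (p := 2) two_ne_zero
  simp only [ENNReal.coe_ofNat, NNReal.coe_ofNat, ENNReal.rpow_ofNat] at this
  rw [this, xsMeasure, lintegral_withDensity_eq_lintegral_mul_non_measurable _
    (measurable_omegaD hd s).ennreal_ofReal (ae_of_all _ fun _ => ENNReal.ofReal_lt_top)]
  rfl

lemma XnormSq_conj_comp_neg (G : EuclideanSpace ℝ (Fin d) → ℂ) :
    XnormSq d hd s (fun ξ => conj (G (-ξ))) = XnormSq d hd s G := by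
  simp only [XnormSq, RCLike.nnnorm_conj]
  rw [← lintegral_neg_eq_self fun ξ => ENNReal.ofReal (omegaD d hd s ξ) * (‖G ξ‖₊ : ℝ≥0∞) ^ 2]
  simp only [omegaD_neg]

lemma locallyIntegrable_of_XnormSq_lt_top {G : EuclideanSpace ℝ (Fin d) → ℂ}
    (hG : AEMeasurable G) (hfin : XnormSq d hd s G < ∞) : LocallyIntegrable G :=
  locallyIntegrable_of_lintegral_mul_enorm_sq_lt_top (measurable_omegaD hd s).ennreal_ofReal
    (fun _ hK => setLIntegral_inv_omegaD_lt_top hd s hK) hG.aestronglyMeasurable hfin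

lemma eLpNorm_sub_conj_comp_neg {F : EuclideanSpace ℝ (Fin d) → ℂ}
    (hF : ∀ᵐ ξ, conj (F ξ) = F (-ξ)) (G : EuclideanSpace ℝ (Fin d) → ℂ) :
    eLpNorm (F - fun ξ => conj (G (-ξ))) 2 (xsMeasure d hd s)
      = eLpNorm (F - G) 2 (xsMeasure d hd s) := by
  refine (ENNReal.pow_right_strictMono two_ne_zero).injective ?_
  simp only [← XnormSq_eq_eLpNorm_sq, ← XnormSq_conj_comp_neg hd s (F - G)]
  refine lintegral_congr_ae (hF.mono fun ξ hξ => ?_)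
  simp [← hξ]

lemma ae_conj_eq_comp_neg_of_tendsto {F : ℕ → EuclideanSpace ℝ (Fin d) → ℂ}
    {G : EuclideanSpace ℝ (Fin d) → ℂ} (hF : ∀ m, AEMeasurable (F m))
    (hsymm : ∀ m, ∀ᵐ ξ, conj (F m ξ) = F m (-ξ)) (hG : AEMeasurable G)
    (hlim : Tendsto (fun m => eLpNorm (F m - G) 2 (xsMeasure d hd s)) atTop (𝓝 0)) :
    ∀ᵐ ξ, conj (G ξ) = G (-ξ) := by
  set G' : EuclideanSpace ℝ (Fin d) → ℂ := fun ξ => conj (G (-ξ))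
  have hG' : AEMeasurable G' := Complex.continuous_conj.measurable.comp_aemeasurable
    (hG.comp_quasiMeasurePreserving (Measure.measurePreserving_neg _).quasiMeasurePreserving)
  have hlim' : Tendsto (fun m => eLpNorm (F m - G') 2 (xsMeasure d hd s)) atTop (𝓝 0) :=
    hlim.congr fun m => (eLpNorm_sub_conj_comp_neg hd s (hsymm m) G).symm
  have hsm {H : EuclideanSpace ℝ (Fin d) → ℂ} (hH : AEMeasurable H) :
      AEStronglyMeasurable H (xsMeasure d hd s) :=
    (hH.mono_ac (xsMeasure_absolutelyContinuous hd s)).aestronglyMeasurable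
  have hGG' : G =ᵐ[xsMeasure d hd s] G' := tendstoInMeasure_ae_unique
    (tendstoInMeasure_of_tendsto_eLpNorm two_ne_zero (fun m => hsm (hF m)) (hsm hG) hlim)
    (tendstoInMeasure_of_tendsto_eLpNorm two_ne_zero (fun m => hsm (hF m)) (hsm hG') hlim')
  filter_upwards [(absolutelyContinuous_xsMeasure hd s).ae_le hGG'] with ξ hξ
  simp [hξ, G']

end Weight

theorem stmt_11_general (d : ℕ) (hd : 0 < d) (s : ℝ)
    (F : ℕ → EuclideanSpace ℝ (Fin d) → ℂ)
    (hmeas : ∀ m, AEMeasurable (F m))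
    (hsymm : ∀ m, ∀ᵐ ξ ∂volume, conj (F m ξ) = F m (-ξ))
    (hfin : ∀ m, XnormSq d hd s (F m) < ⊤)
    (hcau : ∀ ε : ℝ≥0∞, 0 < ε → ∃ N : ℕ, ∀ p, N ≤ p → ∀ q, N ≤ q →
      XnormSq d hd s (fun ξ => F p ξ - F q ξ) < ε) :
    ∃ G : EuclideanSpace ℝ (Fin d) → ℂ,
      AEMeasurable G ∧
      (∀ᵐ ξ ∂volume, conj (G ξ) = G (-ξ)) ∧
      LocallyIntegrable G volume ∧
      XnormSq d hd s G < ⊤ ∧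
      Filter.Tendsto (fun m => XnormSq d hd s (fun ξ => F m ξ - G ξ))
        Filter.atTop (nhds 0) := by
  have hmem : ∀ m, MemLp (F m) 2 (xsMeasure d hd s) := fun m =>
    ⟨((hmeas m).mono_ac (xsMeasure_absolutelyContinuous hd s)).aestronglyMeasurable, by
      simpa [XnormSq_eq_eLpNorm_sq] using hfin m⟩
  obtain ⟨G, hGmem, hlim⟩ := exists_memLp_tendsto_eLpNorm_of_cauchy hmem fun ε hε => by
    obtain ⟨N, hN⟩ := hcau (ε ^ 2) (by positivity)
    refine ⟨N, fun p hp q hq => (ENNReal.pow_right_strictMono two_ne_zero).lt_iff_lt.mp ?_⟩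
    rw [← XnormSq_eq_eLpNorm_sq]
    exact hN p hp q hq
  have hG : AEMeasurable G :=
    hGmem.aestronglyMeasurable.aemeasurable.mono_ac (absolutelyContinuous_xsMeasure hd s)
  have hGfin : XnormSq d hd s G < ⊤ := by
    rw [XnormSq_eq_eLpNorm_sq]
    exact ENNReal.pow_lt_top hGmem.eLpNorm_lt_top
  refine ⟨G, hG, ae_conj_eq_comp_neg_of_tendsto hd s hmeas hsymm hG hlim,
    locallyIntegrable_of_XnormSq_lt_top hd s hG hGfin, hGfin, ?_⟩
  have hlim₂ := ENNReal.Tendsto.pow (n := 2) hlim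
  rw [zero_pow two_ne_zero] at hlim₂
  simp only [XnormSq_eq_eLpNorm_sq]
  exact hlim₂

/-- completeness of `X^s(ℝ^d)`; Fourier-side formulation: an element of
`X^s` is represented by its Fourier transform `F`, a locally integrable a.e.
conjugate-symmetric function with finite `X^s` norm.  Every Cauchy sequence in `X^s(ℝ^d)`
converges in `X^s(ℝ^d)`; together with the (elementary) inner-product structure this makes
`X^s(ℝ^d)` a Hilbert space. -/
theorem stmt_11 (d : ℕ) (hd : 0 < d) (s : ℝ) (hs : 0 ≤ s)
    (F : ℕ → EuclideanSpace ℝ (Fin d) → ℂ)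
    (hmeas : ∀ m, AEMeasurable (F m))
    (hsymm : ∀ m, ∀ᵐ ξ ∂volume, conj (F m ξ) = F m (-ξ))
    (hloc : ∀ m, LocallyIntegrable (F m) volume)
    (hfin : ∀ m, XnormSq d hd s (F m) < ⊤)
    (hcau : ∀ ε : ℝ≥0∞, 0 < ε → ∃ N : ℕ, ∀ p, N ≤ p → ∀ q, N ≤ q →
      XnormSq d hd s (fun ξ => F p ξ - F q ξ) < ε) :
    ∃ G : EuclideanSpace ℝ (Fin d) → ℂ,
      AEMeasurable G ∧
      (∀ᵐ ξ ∂volume, conj (G ξ) = G (-ξ)) ∧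
      LocallyIntegrable G volume ∧
      XnormSq d hd s G < ⊤ ∧
      Filter.Tendsto (fun m => XnormSq d hd s (fun ξ => F m ξ - G ξ))
        Filter.atTop (nhds 0) :=
  stmt_11_general d hd s F hmeas hsymm hfin hcau
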